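/- If (δ_u, u) and (δ_v, v) are both Nash equilibria of the SLAR game, then u = v. -/
import Mathlib


open MeasureTheory Finset

/-- The payoff of the SLAR game: expected hinge loss on the perturbed data plus the
ℓ₂ regularizer; the adversary chooses `δ` to maximize, the learner chooses `w` to minimize. -/
noncomputable def slarPayoff {d : ℕ} (μ : Measure ((Fin d → ℝ) × ℝ)) (lam : ℝ)
    (δ : (Fin d → ℝ) × ℝ → Fin d → ℝ) (w : Fin d → ℝ) : ℝ :=
  (∫ p, max 0 (1 - p.2 * ∑ i, w i * (p.1 i + δ p i)) ∂μ) + lam / 2 * ∑ i, (w i) ^ 2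

/-- `(δ*, w*)` is a pure-strategy Nash equilibrium of the SLAR game with perturbation
budget `ε`: `δ*` is admissible, no admissible perturbation gives the adversary a larger
payoff against `w*`, and no model gives the learner a smaller payoff against `δ*`. -/
def IsSlarNash {d : ℕ} (μ : Measure ((Fin d → ℝ) × ℝ)) (lam ε : ℝ)
    (δstar : (Fin d → ℝ) × ℝ → Fin d → ℝ) (wstar : Fin d → ℝ) : Prop :=
  Measurable δstar ∧ (∀ p i, |δstar p i| ≤ ε) ∧
  (∀ δ : (Fin d → ℝ) × ℝ → Fin d → ℝ, Measurable δ → (∀ p i, |δ p i| ≤ ε) →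
    slarPayoff μ lam δ wstar ≤ slarPayoff μ lam δstar wstar) ∧
  (∀ w, slarPayoff μ lam δstar wstar ≤ slarPayoff μ lam δstar w)

/-- Integrability of the hinge loss on the perturbed data. -/
lemma slar_hinge_integrable {d : ℕ} (μ : Measure ((Fin d → ℝ) × ℝ))
    [IsProbabilityMeasure μ] (ε : ℝ)
    (hy : ∀ᵐ p ∂μ, p.2 = 1 ∨ p.2 = -1)
    (hx : ∀ i, Integrable (fun p : (Fin d → ℝ) × ℝ => |p.1 i|) μ)
    (δ : (Fin d → ℝ) × ℝ → Fin d → ℝ) (hδm : Measurable δ)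
    (hδb : ∀ p i, |δ p i| ≤ ε) (w : Fin d → ℝ) :
    Integrable (fun p : (Fin d → ℝ) × ℝ =>
      max 0 (1 - p.2 * ∑ i, w i * (p.1 i + δ p i))) μ := by
  have hmeas : Measurable (fun p : (Fin d → ℝ) × ℝ =>
      max 0 (1 - p.2 * ∑ i, w i * (p.1 i + δ p i))) := by
    apply Measurable.max measurable_const
    apply Measurable.sub measurable_const
    apply Measurable.mul measurable_snd
    apply Finset.measurable_sum
    intro i _
    exact measurable_const.mul
      (((measurable_pi_apply i).comp measurable_fst).add
        ((measurable_pi_apply i).comp hδm))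
  have hg : Integrable (fun p : (Fin d → ℝ) × ℝ =>
      1 + ∑ i, |w i| * (|p.1 i| + ε)) μ := by
    refine (integrable_const 1).add (integrable_finset_sum _ fun i _ => ?_)
    exact ((hx i).add (integrable_const ε)).const_mul (|w i|)
  refine hg.mono' hmeas.aestronglyMeasurable ?_
  filter_upwards [hy] with p hp
  have habs : |p.2| = 1 := by rcases hp with h | h <;> simp [h]
  have hsum : |∑ i, w i * (p.1 i + δ p i)| ≤ ∑ i, |w i| * (|p.1 i| + ε) := by
    refine (Finset.abs_sum_le_sum_abs _ _).trans (Finset.sum_le_sum fun i _ => ?_)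
    rw [abs_mul]
    refine mul_le_mul_of_nonneg_left ?_ (abs_nonneg _)
    exact (abs_add_le _ _).trans (by linarith [hδb p i])
  have h1 : |max 0 (1 - p.2 * ∑ i, w i * (p.1 i + δ p i))|
      ≤ |1 - p.2 * ∑ i, w i * (p.1 i + δ p i)| := by
    rw [abs_of_nonneg (le_max_left _ _)]
    exact max_le (abs_nonneg _) (le_abs_self _)
  calc |max 0 (1 - p.2 * ∑ i, w i * (p.1 i + δ p i))|
      ≤ |1 - p.2 * ∑ i, w i * (p.1 i + δ p i)| := h1
    _ ≤ |(1 : ℝ)| + |p.2 * ∑ i, w i * (p.1 i + δ p i)| := abs_sub _ _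
    _ = 1 + |∑ i, w i * (p.1 i + δ p i)| := by rw [abs_mul, habs]; simp
    _ ≤ 1 + ∑ i, |w i| * (|p.1 i| + ε) := by linarith

/-- any two Nash equilibria `(δᵤ, u)` and `(δᵥ, v)` of the SLAR game select
the same model: `u = v`. -/
theorem nash_equilibrium_unique {d : ℕ} (μ : Measure ((Fin d → ℝ) × ℝ))
    [IsProbabilityMeasure μ] (lam ε : ℝ) (hlam : 0 < lam) (hε : 0 ≤ ε)
    (hy : ∀ᵐ p ∂μ, p.2 = 1 ∨ p.2 = -1)
    (hx : ∀ i, Integrable (fun p : (Fin d → ℝ) × ℝ => |p.1 i|) μ)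
    (δu δv : (Fin d → ℝ) × ℝ → Fin d → ℝ) (u v : Fin d → ℝ)
    (hu : IsSlarNash μ lam ε δu u) (hv : IsSlarNash μ lam ε δv v) :
    u = v := by
  obtain ⟨hum, hub, huA, huL⟩ := hu
  obtain ⟨hvm, hvb, hvA, hvL⟩ := hv
  by_contra hne
  -- exchange argument: all four payoffs coincide
  have h1 : slarPayoff μ lam δu u ≤ slarPayoff μ lam δu v := huL v
  have h2 : slarPayoff μ lam δu v ≤ slarPayoff μ lam δv v := hvA δu hum hub
  have h3 : slarPayoff μ lam δv v ≤ slarPayoff μ lam δv u := hvL u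
  have h4 : slarPayoff μ lam δv u ≤ slarPayoff μ lam δu u := huA δv hvm hvb
  have heq : slarPayoff μ lam δu v = slarPayoff μ lam δu u := le_antisymm (by linarith) h1
  -- the midpoint
  set m : Fin d → ℝ := fun i => (u i + v i) / 2 with hm
  obtain ⟨i0, hi0⟩ : ∃ i, u i ≠ v i := by
    by_contra h
    push_neg at h
    exact hne (funext h)
  -- integrability of the three hinge losses
  have Iu := slar_hinge_integrable μ ε hy hx δu hum hub u
  have Iv := slar_hinge_integrable μ ε hy hx δu hum hub v
  have Im := slar_hinge_integrable μ ε hy hx δu hum hub m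
  -- convexity of hinge part
  have hint : (∫ p, max 0 (1 - p.2 * ∑ i, m i * (p.1 i + δu p i)) ∂μ)
      ≤ ((∫ p, max 0 (1 - p.2 * ∑ i, u i * (p.1 i + δu p i)) ∂μ)
        + ∫ p, max 0 (1 - p.2 * ∑ i, v i * (p.1 i + δu p i)) ∂μ) / 2 := by
    have hpt : ∀ p : (Fin d → ℝ) × ℝ,
        max 0 (1 - p.2 * ∑ i, m i * (p.1 i + δu p i))
        ≤ (max 0 (1 - p.2 * ∑ i, u i * (p.1 i + δu p i))
          + max 0 (1 - p.2 * ∑ i, v i * (p.1 i + δu p i))) / 2 := by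
      intro p
      have hs : (∑ i, m i * (p.1 i + δu p i))
          = ((∑ i, u i * (p.1 i + δu p i)) + ∑ i, v i * (p.1 i + δu p i)) / 2 := by
        rw [← Finset.sum_add_distrib, Finset.sum_div]
        exact Finset.sum_congr rfl fun i _ => by simp [hm]; ring
      rw [hs]
      set a := 1 - p.2 * ∑ i, u i * (p.1 i + δu p i)
      set b := 1 - p.2 * ∑ i, v i * (p.1 i + δu p i)
      have : 1 - p.2 * (((∑ i, u i * (p.1 i + δu p i)) + ∑ i, v i * (p.1 i + δu p i)) / 2)
          = (a + b) / 2 := by simp [a, b]; ring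
      rw [this]
      refine max_le (by positivity) ?_
      have ha := le_max_right (0 : ℝ) a
      have hb := le_max_right (0 : ℝ) b
      have hab : a + b ≤ 0 ⊔ a + 0 ⊔ b := add_le_add ha hb
      calc (a + b) / 2 ≤ (0 ⊔ a + 0 ⊔ b) / 2 := by
            apply div_le_div_of_nonneg_right hab
            norm_num
        _ = _ := rfl
    calc (∫ p, max 0 (1 - p.2 * ∑ i, m i * (p.1 i + δu p i)) ∂μ)
        ≤ ∫ p, (max 0 (1 - p.2 * ∑ i, u i * (p.1 i + δu p i))
          + max 0 (1 - p.2 * ∑ i, v i * (p.1 i + δu p i))) / 2 ∂μ :=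
          integral_mono Im ((Iu.add Iv).div_const 2) hpt
      _ = ((∫ p, max 0 (1 - p.2 * ∑ i, u i * (p.1 i + δu p i)) ∂μ)
          + ∫ p, max 0 (1 - p.2 * ∑ i, v i * (p.1 i + δu p i)) ∂μ) / 2 := by
          rw [integral_div, integral_add Iu Iv]
  -- strict convexity of the regularizer
  have hreg : (∑ i, (m i) ^ 2) < ((∑ i, (u i) ^ 2) + ∑ i, (v i) ^ 2) / 2 := by
    rw [← Finset.sum_add_distrib, Finset.sum_div]
    refine Finset.sum_lt_sum (fun i _ => ?_) ⟨i0, Finset.mem_univ i0, ?_⟩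
    · simp only [hm]
      nlinarith [sq_nonneg (u i - v i)]
    · simp only [hm]
      nlinarith [sq_abs (u i0 - v i0), sq_pos_of_ne_zero (sub_ne_zero.mpr hi0)]
  -- combine: payoff at midpoint is strictly below the equilibrium value
  have hmid : slarPayoff μ lam δu m
      < (slarPayoff μ lam δu u + slarPayoff μ lam δu v) / 2 := by
    unfold slarPayoff
    have hl : lam / 2 * ∑ i, (m i) ^ 2
        < lam / 2 * (((∑ i, (u i) ^ 2) + ∑ i, (v i) ^ 2) / 2) := by
      exact mul_lt_mul_of_pos_left hreg (by positivity)
    linarith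
  rw [heq] at hmid
  have : slarPayoff μ lam δu u ≤ slarPayoff μ lam δu m := huL m
  linarith
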